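/- For a finite-dimensional Hilbert space with Hamiltonian H, the map β ↦ tr(H ρ_β), where ρ_β = e^{-βH}/tr(e^{-βH}) is the Gibbs state, has derivative -tr((H - E(β))² ρ_β) with E(β) = tr(H ρ_β); in particular this map is monotonically decreasing in β. -/

import Mathlib

/-!
Diagonalising `H = U diag(λ) U*`, the functional calculus turns every trace `tr(f(H) ρ_β)` into
the Boltzmann average `⟨f⟩_β = ∑ f(λᵢ) e^{-βλᵢ} / ∑ e^{-βλᵢ}` over the eigenvalues. Since
`d/dβ e^{-βλ} = -λ e^{-βλ}`, the quotient rule gives `d⟨f⟩_β/dβ = -(⟨f·λ⟩_β - ⟨f⟩_β ⟨λ⟩_β)`; for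
`f = id` this is minus the variance `⟨(λ - E(β))²⟩_β ≥ 0`.
-/

open scoped Matrix

variable {n : Type*} [Fintype n] [DecidableEq n]

/-- The Gibbs state (density matrix) at inverse temperature `β` for the
Hamiltonian `H`: `ρ_β = e^{-βH} / tr(e^{-βH})`. -/
noncomputable def gibbsState (H : Matrix n n ℂ) (β : ℝ) : Matrix n n ℂ :=
  ((NormedSpace.exp ((-β : ℂ) • H)).trace)⁻¹ • NormedSpace.exp ((-β : ℂ) • H)

/-- The expected energy in the Gibbs state: `E(β) = tr(H ρ_β)`. -/
noncomputable def gibbsEnergy (H : Matrix n n ℂ) (β : ℝ) : ℝ :=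
  ((H * gibbsState H β).trace).re

section BoltzmannAverage

variable {ι : Type*} [Fintype ι] (E : ι → ℝ)

noncomputable def boltzmannSum (f : ℝ → ℝ) (β : ℝ) : ℝ :=
  ∑ i, f (E i) * Real.exp (-β * E i)

noncomputable def gibbsAverage (f : ℝ → ℝ) (β : ℝ) : ℝ :=
  boltzmannSum E f β / boltzmannSum E 1 β

theorem boltzmannSum_one_pos [Nonempty ι] (β : ℝ) : 0 < boltzmannSum E 1 β :=
  Finset.sum_pos (fun i _ => by simpa using Real.exp_pos _) Finset.univ_nonempty

theorem hasDerivAt_boltzmannSum (f : ℝ → ℝ) (β : ℝ) :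
    HasDerivAt (boltzmannSum E f) (-boltzmannSum E (fun x => f x * x) β) β := by
  unfold boltzmannSum
  rw [← Finset.sum_neg_distrib]
  refine HasDerivAt.fun_sum fun i _ => ?_
  exact ((((hasDerivAt_neg β).mul_const (E i)).exp).const_mul (f (E i))).congr_deriv (by ring)

theorem boltzmannSum_sub_sq (c β : ℝ) :
    boltzmannSum E (fun x => (x - c) ^ 2) β =
      boltzmannSum E (fun x => x * x) β - 2 * c * boltzmannSum E id β
        + c ^ 2 * boltzmannSum E 1 β := by
  simp only [boltzmannSum, Finset.mul_sum, ← Finset.sum_sub_distrib, ← Finset.sum_add_distrib]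
  congr 1 with i
  simp only [id, Pi.one_apply]
  ring

theorem gibbsAverage_nonneg {f : ℝ → ℝ} (hf : ∀ x, 0 ≤ f x) (β : ℝ) :
    0 ≤ gibbsAverage E f β :=
  div_nonneg (Finset.sum_nonneg fun _ _ => mul_nonneg (hf _) (Real.exp_pos _).le)
    (Finset.sum_nonneg fun _ _ => by simpa using (Real.exp_pos _).le)

theorem hasDerivAt_gibbsAverage [Nonempty ι] (f : ℝ → ℝ) (β : ℝ) :
    HasDerivAt (gibbsAverage E f)
      (-(gibbsAverage E (fun x => f x * x) β - gibbsAverage E f β * gibbsAverage E id β)) β := by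
  have hZ := (boltzmannSum_one_pos E β).ne'
  refine ((hasDerivAt_boltzmannSum E f β).div (hasDerivAt_boltzmannSum E 1 β) hZ).congr_deriv ?_
  have h_one_mul_id : (fun x => (1 : ℝ → ℝ) x * x) = id := by ext; simp
  simp only [gibbsAverage, h_one_mul_id]
  field_simp
  ring

theorem hasDerivAt_gibbsAverage_id [Nonempty ι] (β : ℝ) :
    HasDerivAt (gibbsAverage E id)
      (-gibbsAverage E (fun x => (x - gibbsAverage E id β) ^ 2) β) β := by
  refine (hasDerivAt_gibbsAverage E id β).congr_deriv ?_
  have hZ := (boltzmannSum_one_pos E β).ne'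
  simp only [gibbsAverage, boltzmannSum_sub_sq, id]
  field_simp
  ring

end BoltzmannAverage

namespace Matrix.IsHermitian

variable {H : Matrix n n ℂ} (hH : H.IsHermitian)
include hH

theorem trace_cfc (f : ℝ → ℝ) :
    (cfc f H).trace = ∑ i, (f (hH.eigenvalues i) : ℂ) := by
  rw [hH.cfc_eq, IsHermitian.cfc, Unitary.conjStarAlgAut_apply, trace_mul_cycle,
    Unitary.coe_star_mul_self, one_mul, trace_diagonal]
  rfl

open scoped Matrix.Norms.L2Operator in
theorem exp_ofReal_smul_eq_cfc (t : ℝ) :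
    NormedSpace.exp ((t : ℂ) • H) = cfc (fun x => Real.exp (t * x)) H := by
  rw [Complex.coe_smul, ← CFC.real_exp_eq_normedSpace_exp
    ((IsSelfAdjoint.all t).smul hH.isSelfAdjoint), ← cfc_comp_smul t Real.exp H]
  rfl

theorem sub_smul_one_sq_eq_cfc (c : ℝ) :
    (H - (c : ℂ) • 1) ^ 2 = cfc (fun x => (x - c) ^ 2) H := by
  rw [cfc_pow (fun x => x - c) 2 H, cfc_sub (fun x => x) (fun _ => c) H, cfc_id' ℝ H,
    cfc_const c H, Algebra.algebraMap_eq_smul_one, Complex.coe_smul]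

theorem trace_cfc_mul_gibbsState (f : ℝ → ℝ) (β : ℝ) :
    (cfc f H * gibbsState H β).trace = gibbsAverage hH.eigenvalues f β := by
  have hexp : NormedSpace.exp ((-β : ℂ) • H) = cfc (fun x => Real.exp (-β * x)) H := by
    rw [← hH.exp_ofReal_smul_eq_cfc, Complex.ofReal_neg]
  rw [gibbsState, hexp, mul_smul_comm, trace_smul,
    ← cfc_mul f _ H (H.finite_real_spectrum.continuousOn f), hH.trace_cfc, hH.trace_cfc,
    gibbsAverage, boltzmannSum, boltzmannSum]
  push_cast
  simp only [Pi.one_apply, Complex.ofReal_one, one_mul, smul_eq_mul, div_eq_inv_mul]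

theorem gibbsEnergy_eq_gibbsAverage : gibbsEnergy H = gibbsAverage hH.eigenvalues id := by
  ext β
  have h := hH.trace_cfc_mul_gibbsState id β
  rw [cfc_id ℝ H] at h
  rw [gibbsEnergy, h, Complex.ofReal_re]

end Matrix.IsHermitian

/-- The map `β ↦ tr(H ρ_β)` has derivative `-tr((H - E(β))² ρ_β)`; in
particular it is monotonically decreasing in `β`. -/
theorem hasDerivAt_gibbsEnergy [Nonempty n] (H : Matrix n n ℂ) (hH : H.IsHermitian) :
    (∀ β : ℝ,
      HasDerivAt (gibbsEnergy H)
        (-(((H - (gibbsEnergy H β : ℂ) • (1 : Matrix n n ℂ)) ^ 2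
            * gibbsState H β).trace).re) β) ∧
      Antitone (gibbsEnergy H) := by
  have hVar : ∀ β : ℝ,
      (((H - (gibbsEnergy H β : ℂ) • (1 : Matrix n n ℂ)) ^ 2 * gibbsState H β).trace).re =
        gibbsAverage hH.eigenvalues (fun x => (x - gibbsEnergy H β) ^ 2) β := fun β => by
    rw [hH.sub_smul_one_sq_eq_cfc, hH.trace_cfc_mul_gibbsState, Complex.ofReal_re]
  have hDeriv : ∀ β : ℝ, HasDerivAt (gibbsEnergy H)
      (-gibbsAverage hH.eigenvalues (fun x => (x - gibbsEnergy H β) ^ 2) β) β := by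
    rw [hH.gibbsEnergy_eq_gibbsAverage]
    exact hasDerivAt_gibbsAverage_id _
  simp only [hVar]
  refine ⟨hDeriv, antitone_of_deriv_nonpos (fun β => (hDeriv β).differentiableAt) fun β => ?_⟩
  rw [(hDeriv β).deriv, neg_nonpos]
  exact gibbsAverage_nonneg _ (fun _ => sq_nonneg _) β
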